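/- Let U and V be independent exponential random variables with means σ_r² and σ_{r,2}² respectively, and let λ, θ_r > 0. Then P( λV(1 - θ_r/U) ≤ θ_r ) = 1 - exp(-θ_r/σ_r² - θ_r/(λσ_{r,2}²)) · μ·K1(μ), where μ = 2θ_r/√(λσ_r²σ_{r,2}²) and K1 is the modified Bessel function of the second kind of order 1. -/

import Mathlib

/-!
Conditioning on `U = u`, the event fails exactly when `u > θ` and `V > θu/(λ(u - θ))`, so
its complement has probability `∫_θ^∞ r e^{-ru} e^{-cu/(u-θ)} du` with `r = 1/σ_r²` and
`c = θ/(λσ_{r,2}²)`. The shift `u = θ + x` turns this into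
`r e^{-rθ-c} ∫_0^∞ e^{-cθ/x - rx} dx`, and the substitution `x = s eᵗ` with `s = √(cθ/r)`
turns `-cθ/x - rx` into `-2√(rcθ) cosh t`; folding `t < 0` onto `t > 0` then gives
`2s K₁(2√(rcθ))`, and `2√(rcθ) = μ`.
-/

open MeasureTheory ProbabilityTheory Real

/-- The modified Bessel function of the second kind of order 1,
via the integral representation `K₁(x) = ∫₀^∞ exp(-x cosh t) cosh t dt`. -/
noncomputable def besselK1 (x : ℝ) : ℝ :=
  ∫ t in Set.Ioi (0 : ℝ), Real.exp (-x * Real.cosh t) * Real.cosh t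

open Set

lemma besselK1_nonneg (x : ℝ) : 0 ≤ besselK1 x :=
  setIntegral_nonneg measurableSet_Ioi fun t _ => by positivity

lemma integrableOn_besselK1_integrand {m : ℝ} (hm : 0 < m) :
    IntegrableOn (fun t => exp (-m * cosh t) * cosh t) (Ioi 0) := by
  refine ((exp_neg_integrableOn_Ioi 0 (by positivity : 0 < m / 4)).const_mul (2 / m)).mono'
    (by fun_prop) (ae_restrict_of_forall_mem measurableSet_Ioi fun t ht => ?_)
  have hcosh : t / 2 ≤ cosh t := by
    rw [cosh_eq]; linarith [add_one_le_exp t, exp_pos (-t)]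
  have hlin : cosh t ≤ 2 / m * exp (m / 2 * cosh t) := by
    have := add_one_le_exp (m / 2 * cosh t)
    rw [div_mul_eq_mul_div, le_div_iff₀ hm]; nlinarith [exp_pos (m / 2 * cosh t)]
  rw [Real.norm_of_nonneg (by positivity)]
  calc exp (-m * cosh t) * cosh t ≤ exp (-m * cosh t) * (2 / m * exp (m / 2 * cosh t)) := by
        gcongr
    _ = 2 / m * exp (-(m / 2) * cosh t) := by
        rw [mul_left_comm, ← exp_add]; ring_nf
    _ ≤ 2 / m * exp (-(m / 4) * t) := by
        gcongr 2 / m * exp ?_; nlinarith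

lemma ofReal_besselK1 {m : ℝ} (hm : 0 < m) :
    ENNReal.ofReal (besselK1 m) = ∫⁻ t in Ioi 0, ENNReal.ofReal (exp (-m * cosh t) * cosh t) :=
  ofReal_integral_eq_lintegral_ofReal (integrableOn_besselK1_integrand hm)
    (ae_of_all _ fun t => by positivity)

lemma lintegral_Ioi_zero_eq_lintegral_comp_mul_exp {s : ℝ} (hs : 0 < s) (g : ℝ → ENNReal) :
    ∫⁻ x in Ioi 0, g x = ∫⁻ t, ENNReal.ofReal (s * exp t) * g (s * exp t) := by
  have himage : (fun t => s * exp t) '' univ = Ioi 0 := by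
    rw [image_univ, show (fun t => s * exp t) = (s * ·) ∘ exp from rfl, range_comp, range_exp,
      image_mul_left_Ioi hs, mul_zero]
  rw [← himage, lintegral_image_eq_lintegral_abs_deriv_mul MeasurableSet.univ
    (fun t _ => ((hasDerivAt_exp t).const_mul s).hasDerivWithinAt)
    (fun t _ u _ h => exp_injective (mul_left_cancel₀ hs.ne' h)), Measure.restrict_univ]
  simp only [abs_of_pos (mul_pos hs (exp_pos _))]

lemma lintegral_eq_lintegral_Ioi_add_comp_neg {h : ℝ → ENNReal} (hh : Measurable h) :
    ∫⁻ t, h t = ∫⁻ t in Ioi 0, (h t + h (-t)) := by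
  have hneg : ∫⁻ t in Iic 0, h t = ∫⁻ t in Ioi 0, h (-t) := by
    rw [← setLIntegral_congr Iio_ae_eq_Iic, ← neg_zero, ← image_neg_Ioi,
      lintegral_image_eq_lintegral_abs_deriv_mul measurableSet_Ioi
        (fun t _ => (hasDerivAt_neg t).hasDerivWithinAt) neg_injective.injOn]
    simp
  rw [lintegral_add_left hh, ← hneg, ← compl_Ioi, lintegral_add_compl h measurableSet_Ioi]

lemma lintegral_Ioi_exp_neg_div_sub_mul {s q : ℝ} (hs : 0 < s) (hq : 0 < q) :
    ∫⁻ x in Ioi 0, ENNReal.ofReal (exp (-(s * q) / x - q / s * x)) =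
      ENNReal.ofReal (2 * s * besselK1 (2 * q)) := by
  have hsubst : ∀ t, -(s * q) / (s * exp t) - q / s * (s * exp t) = -(2 * q) * cosh t := by
    intro t; rw [cosh_eq, exp_neg]; field_simp; ring
  calc ∫⁻ x in Ioi 0, ENNReal.ofReal (exp (-(s * q) / x - q / s * x))
      = ∫⁻ t, ENNReal.ofReal (s * exp t * exp (-(2 * q) * cosh t)) := by
        rw [lintegral_Ioi_zero_eq_lintegral_comp_mul_exp hs]
        simp only [hsubst, ← ENNReal.ofReal_mul (mul_pos hs (exp_pos _)).le]
    _ = ∫⁻ t in Ioi 0,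
          ENNReal.ofReal (2 * s) * ENNReal.ofReal (exp (-(2 * q) * cosh t) * cosh t) := by
        rw [lintegral_eq_lintegral_Ioi_add_comp_neg (by fun_prop)]
        refine lintegral_congr fun t => ?_
        rw [cosh_neg, ← ENNReal.ofReal_add (by positivity) (by positivity),
          ← ENNReal.ofReal_mul (by positivity), cosh_eq t]
        ring_nf
    _ = ENNReal.ofReal (2 * s * besselK1 (2 * q)) := by
        rw [lintegral_const_mul _ (by fun_prop), ← ofReal_besselK1 (by positivity),
          ← ENNReal.ofReal_mul (by positivity)]

lemma lintegral_Ioi_exponentialPDF_mul_exp_neg_div_sub {r c θ q : ℝ} (hr : 0 < r)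
    (hq : 0 < q) (hq_sq : q ^ 2 = r * c * θ) :
    ∫⁻ u in Ioi θ,
        ENNReal.ofReal (r * exp (-(r * u))) * ENNReal.ofReal (exp (-(c * u / (u - θ)))) =
      ENNReal.ofReal (exp (-(r * θ) - c) * (2 * q * besselK1 (2 * q))) := by
  have hs : 0 < q / r := div_pos hq hr
  have hshift : ∀ x ∈ Ioi (0 : ℝ),
      ENNReal.ofReal |1| * (ENNReal.ofReal (r * exp (-(r * (x + θ)))) *
        ENNReal.ofReal (exp (-(c * (x + θ) / (x + θ - θ))))) =
      ENNReal.ofReal (r * exp (-(r * θ) - c)) *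
        ENNReal.ofReal (exp (-(q / r * q) / x - q / (q / r) * x)) := by
    intro x (hx : 0 < x)
    rw [abs_one, ENNReal.ofReal_one, one_mul, ← ENNReal.ofReal_mul (by positivity),
      ← ENNReal.ofReal_mul (by positivity), mul_assoc, mul_assoc, ← exp_add, ← exp_add]
    congr 3
    rw [add_sub_cancel_right]
    field_simp
    rw [hq_sq]
    ring
  rw [show Ioi θ = (· + θ) '' Ioi 0 by simp,
    lintegral_image_eq_lintegral_abs_deriv_mul (f := (· + θ)) measurableSet_Ioi
      (fun x _ => ((hasDerivAt_add_const_iff θ).2 (hasDerivAt_id x)).hasDerivWithinAt)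
      (add_left_injective θ).injOn, setLIntegral_congr_fun measurableSet_Ioi hshift,
    lintegral_const_mul _ (by fun_prop), lintegral_Ioi_exp_neg_div_sub_mul hs hq,
    ← ENNReal.ofReal_mul (by positivity)]
  congr 1
  field_simp

lemma ae_pos_of_measure_Ioi_zero {μ : Measure ℝ} [IsProbabilityMeasure μ]
    (h : μ (Ioi 0) = 1) : ∀ᵐ x ∂μ, 0 < x :=
  (ae_iff_measure_eq measurableSet_Ioi.nullMeasurableSet).2 (h.trans measure_univ.symm)

lemma eq_expMeasure_of_measure_Ioi {μ : Measure ℝ} [IsProbabilityMeasure μ] {σ : ℝ}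
    (hσ : 0 < σ) (h : ∀ s, 0 ≤ s → μ (Ioi s) = ENNReal.ofReal (exp (-s / σ))) :
    μ = expMeasure σ⁻¹ := by
  refine Measure.ext_of_Iic _ _ fun x => ?_
  rw [show expMeasure σ⁻¹ = volume.withDensity (exponentialPDF σ⁻¹) from rfl,
    withDensity_apply _ measurableSet_Iic,
    lintegral_exponentialPDF_eq_antiDeriv (inv_pos.2 hσ) x]
  split_ifs with hx
  · rw [← compl_Ioi, prob_compl_eq_one_sub measurableSet_Ioi, h x hx, ← ENNReal.ofReal_one,
      ← ENNReal.ofReal_sub _ (exp_pos _).le, neg_div, ← inv_mul_eq_div]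
  · rw [ENNReal.ofReal_zero]
    exact measure_mono_null (t := {x | ¬ 0 < x})
      (fun y (hy : y ≤ x) => not_lt.2 (hy.trans (not_le.1 hx).le))
      (ae_iff.1 (ae_pos_of_measure_Ioi_zero (by simpa using h 0 le_rfl)))

lemma setLIntegral_expMeasure {r : ℝ} {s : Set ℝ} (hs : MeasurableSet s) (hs0 : s ⊆ Ici 0)
    (g : ℝ → ENNReal) (hg : Measurable g) :
    ∫⁻ u in s, g u ∂expMeasure r =
      ∫⁻ u in s, ENNReal.ofReal (r * exp (-(r * u))) * g u := by
  rw [show expMeasure r = volume.withDensity (exponentialPDF r) from rfl,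
    setLIntegral_withDensity_eq_setLIntegral_mul _ (f := exponentialPDF r)
      (measurable_exponentialPDFReal r).ennreal_ofReal hg hs]
  exact setLIntegral_congr_fun hs fun u hu => by
    rw [Pi.mul_apply, exponentialPDF_of_nonneg (hs0 hu)]

lemma ProbabilityTheory.IndepFun.measure_preimage_eq_lintegral {Ω α β : Type*}
    [MeasurableSpace Ω] [MeasurableSpace α] [MeasurableSpace β]
    {P : Measure Ω} [IsFiniteMeasure P]
    {X : Ω → α} {Y : Ω → β} (hX : Measurable X) (hY : Measurable Y) (hXY : IndepFun X Y P)
    {S : Set (α × β)} (hS : MeasurableSet S) :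
    P ((fun ω => (X ω, Y ω)) ⁻¹' S) = ∫⁻ x, P.map Y (Prod.mk x ⁻¹' S) ∂P.map X := by
  rw [← Measure.map_apply (hX.prodMk hY) hS,
    (indepFun_iff_map_prod_eq_prod_map_map hX.aemeasurable hY.aemeasurable).1 hXY,
    Measure.prod_apply hS]

lemma measure_outage_slice {ρ : Measure ℝ} [IsProbabilityMeasure ρ] {σ lam θ u : ℝ}
    (hσ : 0 < σ) (hlam : 0 < lam) (hθ : 0 < θ) (hu : 0 < u)
    (hρ : ∀ s, 0 ≤ s → ρ (Ioi s) = ENNReal.ofReal (exp (-s / σ))) :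
    ρ {v | θ < lam * v * (1 - θ / u)} =
      (Ioi θ).indicator (fun u => ENNReal.ofReal (exp (-(θ / (lam * σ) * u / (u - θ))))) u := by
  rcases le_or_gt u θ with huθ | huθ
  · rw [indicator_of_notMem (show u ∉ Ioi θ from not_lt.2 huθ)]
    refine measure_mono_null (t := {x | ¬ 0 < x}) (fun v (hv : θ < _) (hv0 : 0 < v) => ?_)
      (ae_iff.1 (ae_pos_of_measure_Ioi_zero (by simpa using hρ 0 le_rfl)))
    have : 1 - θ / u ≤ 0 := by rw [sub_nonpos, one_le_div hu]; exact huθ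
    nlinarith [mul_nonpos_of_nonneg_of_nonpos (mul_pos hlam hv0).le this]
  · have hslice : {v | θ < lam * v * (1 - θ / u)} = Ioi (θ * u / (lam * (u - θ))) := by
      ext v
      show θ < lam * v * (1 - θ / u) ↔ θ * u / (lam * (u - θ)) < v
      rw [div_lt_iff₀ (by nlinarith), show lam * v * (1 - θ / u) = v * (lam * (u - θ)) / u by
        field_simp, lt_div_iff₀ hu]
    rw [indicator_of_mem (show u ∈ Ioi θ from huθ), hslice,
      hρ _ (div_nonneg (by positivity) (by nlinarith))]
    congr 3
    field_simp

/-- For independent exponential `U`, `V` with means `σr²`, `σr2²` and `λ, θr > 0`,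
`P(λV(1 - θr/U) ≤ θr) = 1 - exp(-θr/σr² - θr/(λσr2²))·μ·K₁(μ)` where
`μ = 2θr/√(λσr²σr2²)`. -/
theorem stmt_3 {Ω : Type*} [MeasurableSpace Ω] (P : Measure Ω) [IsProbabilityMeasure P]
    (U V : Ω → ℝ) (hUm : Measurable U) (hVm : Measurable V)
    (σrsq σr2sq lam θr : ℝ) (hσr : 0 < σrsq) (hσr2 : 0 < σr2sq)
    (hlam : 0 < lam) (hθr : 0 < θr)
    (hU : ∀ s : ℝ, 0 ≤ s → P {ω | U ω > s} = ENNReal.ofReal (Real.exp (-s / σrsq)))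
    (hV : ∀ s : ℝ, 0 ≤ s → P {ω | V ω > s} = ENNReal.ofReal (Real.exp (-s / σr2sq)))
    (hind : IndepFun U V P) :
    P {ω | lam * V ω * (1 - θr / U ω) ≤ θr} =
      ENNReal.ofReal (1 - Real.exp (-θr / σrsq - θr / (lam * σr2sq)) *
        ((2 * θr / Real.sqrt (lam * σrsq * σr2sq)) *
          besselK1 (2 * θr / Real.sqrt (lam * σrsq * σr2sq)))) := by
  set S : Set (ℝ × ℝ) := {p | θr < lam * p.2 * (1 - θr / p.1)}
  have hS : MeasurableSet S := measurableSet_lt measurable_const (by fun_prop)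
  have := Measure.isProbabilityMeasure_map (μ := P) hUm.aemeasurable
  have := Measure.isProbabilityMeasure_map (μ := P) hVm.aemeasurable
  have htailU s (hs : 0 ≤ s) : P.map U (Ioi s) = ENNReal.ofReal (exp (-s / σrsq)) := by
    rw [Measure.map_apply hUm measurableSet_Ioi]; exact hU s hs
  have htailV s (hs : 0 ≤ s) : P.map V (Ioi s) = ENNReal.ofReal (exp (-s / σr2sq)) := by
    rw [Measure.map_apply hVm measurableSet_Ioi]; exact hV s hs
  have hslices : ∀ᵐ u ∂P.map U, P.map V (Prod.mk u ⁻¹' S) = (Ioi θr).indicator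
      (fun u => ENNReal.ofReal (exp (-(θr / (lam * σr2sq) * u / (u - θr))))) u :=
    (ae_pos_of_measure_Ioi_zero (by simpa using htailU 0 le_rfl)).mono fun u hu =>
      measure_outage_slice hσr2 hlam hθr hu htailV
  have hq_sq :
      (θr / √(lam * σrsq * σr2sq)) ^ 2 = σrsq⁻¹ * (θr / (lam * σr2sq)) * θr := by
    rw [div_pow, sq_sqrt (by positivity)]; field_simp
  calc P {ω | lam * V ω * (1 - θr / U ω) ≤ θr}
        = 1 - P ((fun ω => (U ω, V ω)) ⁻¹' S) := by
        rw [← prob_compl_eq_one_sub ((hUm.prodMk hVm) hS)]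
        congr 1; ext ω; simp [S]
    _ = 1 - ∫⁻ u in Ioi θr, ENNReal.ofReal (σrsq⁻¹ * exp (-(σrsq⁻¹ * u))) *
          ENNReal.ofReal (exp (-(θr / (lam * σr2sq) * u / (u - θr)))) := by
        rw [hind.measure_preimage_eq_lintegral hUm hVm hS, lintegral_congr_ae hslices,
          eq_expMeasure_of_measure_Ioi hσr htailU,
          lintegral_indicator measurableSet_Ioi, setLIntegral_expMeasure measurableSet_Ioi
            (Ioi_subset_Ici hθr.le) _ (by fun_prop)]
    _ = _ := by
        rw [lintegral_Ioi_exponentialPDF_mul_exp_neg_div_sub (by positivity) (by positivity) hq_sq,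
          ← ENNReal.ofReal_one, ← ENNReal.ofReal_sub _ (mul_nonneg (exp_pos _).le
            (mul_nonneg (by positivity) (besselK1_nonneg _))),
          mul_div_assoc]
        ring_nf
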